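/- Let Z and Y be real Hilbert spaces, B : Z → Y a Fredholm bounded linear operator, and Q : Z → Z a bounded self-adjoint linear operator such that ⟪Qz, z⟫ ≥ α‖z‖² for all z ∈ ker B, for some α > 0. Then the operator A : Z × Y → Z × Y, A(z, y) = (Qz + B†y, Bz), satisfies ker A = {0} × ker B† and range A = Z × range B. -/

import Mathlib

/-! On the kernel of `A` we have `Bz = 0` and `⟪Qz, z⟫ = -⟪B†y, z⟫ = -⟪y, Bz⟫ = 0`, so coercivity
gives `z = 0`. For the range, given `(w, Bz₀)` we look for `z = z₀ + k` with `k ∈ ker B` and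
`w - Qz₀ - Qk ∈ (ker B)ᗮ`. Such a `k` exists because `P_{ker B} ∘ Q` is injective, hence bijective,
on the finite-dimensional space `ker B`. Since `range B` is closed, `(ker B)ᗮ = range B†` by the closed
range theorem, which supplies `y`. -/

open ContinuousLinearMap Submodule

namespace ContinuousLinearMap

variable {𝕜 E F : Type*} [RCLike 𝕜] [NormedAddCommGroup E] [InnerProductSpace 𝕜 E]
  [NormedAddCommGroup F] [InnerProductSpace 𝕜 F] [CompleteSpace E]

lemma apply_starProjection_orthogonal_ker (T : E →L[𝕜] F) (z : E) :
    T ((LinearMap.ker (T : E →ₗ[𝕜] F))ᗮ.starProjection z) = T z := by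
  have hK : T ((LinearMap.ker (T : E →ₗ[𝕜] F)).starProjection z) = 0 :=
    LinearMap.mem_ker.mp (starProjection_apply_mem _ z)
  rw [starProjection_orthogonal, sub_apply, id_apply, map_sub, hK, sub_zero]

lemma exists_comp_eq_starProjection_orthogonal_ker [CompleteSpace F] (T : E →L[𝕜] F)
    (hT : IsClosed (Set.range T)) :
    ∃ C : F →L[𝕜] E, C ∘L T = (LinearMap.ker (T : E →ₗ[𝕜] F))ᗮ.starProjection := by
  set K := LinearMap.ker (T : E →ₗ[𝕜] F)
  set f := T ∘L Kᗮ.subtypeL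
  have hinj : Function.Injective f := (injective_iff_map_eq_zero f).mpr fun x hx =>
    Subtype.ext ((mem_bot 𝕜).mp ((inf_orthogonal_eq_bot K).le ⟨hx, x.2⟩))
  have hfT : ∀ z, f ⟨_, starProjection_apply_mem Kᗮ z⟩ = T z :=
    apply_starProjection_orthogonal_ker T
  have hf : IsClosed (Set.range f) := by
    convert hT using 1
    refine subset_antisymm (by rintro _ ⟨x, rfl⟩; exact ⟨x, rfl⟩) ?_
    rintro _ ⟨z, rfl⟩
    exact ⟨_, hfT z⟩
  have : CompleteSpace (LinearMap.range (f : Kᗮ →ₗ[𝕜] F)) := hf.completeSpace_coe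
  refine ⟨Kᗮ.subtypeL ∘L ((f.equivRange hinj hf).symm : _ →L[𝕜] Kᗮ) ∘L
    (LinearMap.range (f : Kᗮ →ₗ[𝕜] F)).orthogonalProjectionOnto, ext fun z => ?_⟩
  set w : Kᗮ := ⟨_, starProjection_apply_mem Kᗮ z⟩
  have hproj := orthogonalProjectionOnto_mem_subspace_eq_self
    (⟨f w, LinearMap.mem_range_self (f : Kᗮ →ₗ[𝕜] F) w⟩ : LinearMap.range (f : Kᗮ →ₗ[𝕜] F))
  simp only [comp_apply, ← hfT]
  rw [hproj, ContinuousLinearEquiv.coe_coe, equivRange_symm_apply]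
  rfl

theorem range_adjoint_of_isClosed_range [CompleteSpace F] (T : E →L[𝕜] F)
    (hT : IsClosed (Set.range T)) :
    LinearMap.range (adjoint T : F →ₗ[𝕜] E) = (LinearMap.ker (T : E →ₗ[𝕜] F))ᗮ := by
  refine le_antisymm (T.orthogonal_ker ▸ le_topologicalClosure _) fun u hu => ?_
  obtain ⟨C, hC⟩ := T.exists_comp_eq_starProjection_orthogonal_ker hT
  refine ⟨adjoint C u, ext_inner_right 𝕜 fun z => ?_⟩
  calc inner 𝕜 (adjoint T (adjoint C u)) z = inner 𝕜 u (C (T z)) := by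
        rw [adjoint_inner_left, adjoint_inner_left]
    _ = inner 𝕜 u z := by
        rw [← comp_apply, hC, ← inner_starProjection_left_eq_right,
          (starProjection_eq_self_iff).mpr hu]

end ContinuousLinearMap

namespace Submodule

variable {𝕜 E : Type*} [RCLike 𝕜] [NormedAddCommGroup E] [InnerProductSpace 𝕜 E]

theorem exists_sub_apply_mem_orthogonal (K : Submodule 𝕜 E) [FiniteDimensional 𝕜 K]
    (Q : E →L[𝕜] E) (hQ : ∀ z ∈ K, inner 𝕜 (Q z) z = 0 → z = 0) (x : E) :
    ∃ k ∈ K, x - Q k ∈ Kᗮ := by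
  set T : K →ₗ[𝕜] K := (K.orthogonalProjectionOnto : E →ₗ[𝕜] K) ∘ₗ (Q : E →ₗ[𝕜] E) ∘ₗ K.subtype
  have hT : Function.Injective T := (injective_iff_map_eq_zero T).mpr fun k hk => by
    have hQk : Q k ∈ Kᗮ := orthogonalProjectionOnto_eq_zero_iff.mp hk
    exact Subtype.ext (hQ k k.2 ((K.mem_orthogonal' _).mp hQk k k.2))
  obtain ⟨k, hk⟩ := LinearMap.injective_iff_surjective.mp hT (K.orthogonalProjectionOnto x)
  refine ⟨k, k.2, orthogonalProjectionOnto_eq_zero_iff.mp ?_⟩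
  rw [map_sub, ← hk]
  exact sub_self _

end Submodule

section SaddlePoint

variable {𝕜 E F : Type*} [RCLike 𝕜] [NormedAddCommGroup E] [InnerProductSpace 𝕜 E]
  [NormedAddCommGroup F] [InnerProductSpace 𝕜 F] [CompleteSpace E] [CompleteSpace F]

noncomputable def saddlePointOperator (Q : E →L[𝕜] E) (B : E →L[𝕜] F) : E × F →L[𝕜] E × F :=
  (Q.coprod (adjoint B)).prod (B ∘L fst 𝕜 E F)

@[simp]
lemma saddlePointOperator_apply (Q : E →L[𝕜] E) (B : E →L[𝕜] F) (zy : E × F) :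
    saddlePointOperator Q B zy = (Q zy.1 + adjoint B zy.2, B zy.1) :=
  rfl

variable {Q : E →L[𝕜] E} {B : E →L[𝕜] F}

theorem ker_saddlePointOperator
    (hQ : ∀ z ∈ LinearMap.ker (B : E →ₗ[𝕜] F), inner 𝕜 (Q z) z = 0 → z = 0) :
    LinearMap.ker (saddlePointOperator Q B : E × F →ₗ[𝕜] E × F) =
      (⊥ : Submodule 𝕜 E).prod (LinearMap.ker (adjoint B : F →ₗ[𝕜] E)) := by
  ext ⟨z, y⟩
  simp only [LinearMap.mem_ker, coe_coe, saddlePointOperator_apply, Prod.mk_eq_zero,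
    Submodule.mem_prod, Submodule.mem_bot]
  constructor
  · rintro ⟨hQB, hBz⟩
    have hQz : inner 𝕜 (Q z) z = 0 :=
      calc inner 𝕜 (Q z) z = inner 𝕜 (Q z + adjoint B y) z - inner 𝕜 (adjoint B y) z := by
            rw [inner_add_left, add_sub_cancel_right]
        _ = 0 := by rw [hQB, adjoint_inner_left, hBz, inner_zero_left, inner_zero_right, sub_zero]
    obtain rfl : z = 0 := hQ z hBz hQz
    simpa using hQB
  · rintro ⟨rfl, hy⟩
    simp [hy]

theorem range_saddlePointOperator [FiniteDimensional 𝕜 (LinearMap.ker (B : E →ₗ[𝕜] F))]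
    (hB : IsClosed (Set.range B))
    (hQ : ∀ z ∈ LinearMap.ker (B : E →ₗ[𝕜] F), inner 𝕜 (Q z) z = 0 → z = 0) :
    LinearMap.range (saddlePointOperator Q B : E × F →ₗ[𝕜] E × F) =
      (⊤ : Submodule 𝕜 E).prod (LinearMap.range (B : E →ₗ[𝕜] F)) := by
  ext ⟨w, v⟩
  simp only [LinearMap.mem_range, coe_coe, saddlePointOperator_apply, Prod.mk.injEq,
    Submodule.mem_prod, Submodule.mem_top, true_and, Prod.exists]
  constructor
  · rintro ⟨z, -, -, hz⟩
    exact ⟨z, hz⟩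
  · rintro ⟨z₀, rfl⟩
    obtain ⟨k, hk, hres⟩ :=
      (LinearMap.ker (B : E →ₗ[𝕜] F)).exists_sub_apply_mem_orthogonal Q hQ (w - Q z₀)
    rw [← B.range_adjoint_of_isClosed_range hB] at hres
    obtain ⟨y, hy⟩ := hres
    refine ⟨z₀ + k, y, ?_, ?_⟩
    · rw [coe_coe] at hy
      rw [hy, map_add]
      abel
    · have hBk : B k = 0 := hk
      rw [map_add, hBk, add_zero]

end SaddlePoint

theorem stmt2_general
    {Z Y : Type*} [NormedAddCommGroup Z] [InnerProductSpace ℝ Z] [CompleteSpace Z]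
    [NormedAddCommGroup Y] [InnerProductSpace ℝ Y] [CompleteSpace Y]
    (B : Z →L[ℝ] Y)
    (hBker : FiniteDimensional ℝ (LinearMap.ker (B : Z →ₗ[ℝ] Y)))
    (hBrange : IsClosed (LinearMap.range (B : Z →ₗ[ℝ] Y) : Set Y))
    (Q : Z →L[ℝ] Z)
    (α : ℝ) (hα : 0 < α)
    (hQcoer : ∀ z ∈ LinearMap.ker (B : Z →ₗ[ℝ] Y), α * ‖z‖ ^ 2 ≤ (inner ℝ (Q z) z : ℝ))
    (A : (Z × Y) →L[ℝ] (Z × Y))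
    (hA : ∀ zy : Z × Y, A zy = (Q zy.1 + (ContinuousLinearMap.adjoint B) zy.2, B zy.1)) :
    LinearMap.ker (A : (Z × Y) →ₗ[ℝ] (Z × Y)) =
        Submodule.prod (⊥ : Submodule ℝ Z)
          (LinearMap.ker (ContinuousLinearMap.adjoint B : Y →ₗ[ℝ] Z)) ∧
      LinearMap.range (A : (Z × Y) →ₗ[ℝ] (Z × Y)) =
        Submodule.prod (⊤ : Submodule ℝ Z) (LinearMap.range (B : Z →ₗ[ℝ] Y)) := by
  have hQ : ∀ z ∈ LinearMap.ker (B : Z →ₗ[ℝ] Y), inner ℝ (Q z) z = 0 → z = 0 := by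
    intro z hz hQz
    have : ‖z‖ ^ 2 ≤ 0 := by nlinarith [hQcoer z hz]
    simpa using this
  obtain rfl : A = saddlePointOperator Q B := ext hA
  exact ⟨ker_saddlePointOperator hQ, range_saddlePointOperator hBrange hQ⟩

/-- In the setting of Statement 1 (real Hilbert spaces `Z`, `Y`,
`B : Z → Y` Fredholm, `Q : Z → Z` bounded self-adjoint and coercive on `ker B`),
the operator `A(z, y) = (Qz + B†y, Bz)` satisfies
`ker A = {0} × ker B†` and `range A = Z × range B`. -/
theorem stmt2
    {Z Y : Type*} [NormedAddCommGroup Z] [InnerProductSpace ℝ Z] [CompleteSpace Z]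
    [NormedAddCommGroup Y] [InnerProductSpace ℝ Y] [CompleteSpace Y]
    (B : Z →L[ℝ] Y)
    (hBker : FiniteDimensional ℝ (LinearMap.ker (B : Z →ₗ[ℝ] Y)))
    (hBrange : IsClosed (LinearMap.range (B : Z →ₗ[ℝ] Y) : Set Y))
    (hBcodim : FiniteDimensional ℝ (Y ⧸ LinearMap.range (B : Z →ₗ[ℝ] Y)))
    (Q : Z →L[ℝ] Z)
    (hQsym : ∀ z₁ z₂ : Z, (inner ℝ (Q z₁) z₂ : ℝ) = inner ℝ (Q z₂) z₁)
    (α : ℝ) (hα : 0 < α)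
    (hQcoer : ∀ z ∈ LinearMap.ker (B : Z →ₗ[ℝ] Y), α * ‖z‖ ^ 2 ≤ (inner ℝ (Q z) z : ℝ))
    (A : (Z × Y) →L[ℝ] (Z × Y))
    (hA : ∀ zy : Z × Y, A zy = (Q zy.1 + (ContinuousLinearMap.adjoint B) zy.2, B zy.1)) :
    LinearMap.ker (A : (Z × Y) →ₗ[ℝ] (Z × Y)) =
        Submodule.prod (⊥ : Submodule ℝ Z)
          (LinearMap.ker (ContinuousLinearMap.adjoint B : Y →ₗ[ℝ] Z)) ∧
      LinearMap.range (A : (Z × Y) →ₗ[ℝ] (Z × Y)) =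
        Submodule.prod (⊤ : Submodule ℝ Z) (LinearMap.range (B : Z →ₗ[ℝ] Y)) :=
  stmt2_general B hBker hBrange Q α hα hQcoer A hA
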